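/- arXiv:1810.06053 — 5 statements merged into one kernel-verified Lean document; each statement's English description precedes it below -/
import Mathlib

section
/- Let p ∈ [1, ∞) and let Z be a random variable with density f_p(x) = exp(-|x|^p/p) / (2 p^{1/p} Γ(1 + 1/p)) on ℝ. Then E[log |Z|] = (ψ(1/p) + log p)/p, where ψ = Γ'/Γ is the digamma function. -/
open Real MeasureTheory Set

lemma abs_log_le_rpow {t ε : ℝ} (ht : 0 < t) (hε : 0 < ε) :
    |Real.log t| ≤ (t ^ ε + t ^ (-ε)) / ε := by
  have key : ∀ u : ℝ, 0 < u → Real.log u ≤ u ^ ε / ε := by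
    intro u hu
    rw [le_div_iff₀ hε, mul_comm, ← Real.log_rpow hu]
    exact (Real.log_le_sub_one_of_pos (Real.rpow_pos_of_pos hu ε)).trans (by linarith)
  rw [abs_le]
  constructor
  · have h := key t⁻¹ (inv_pos.mpr ht)
    rw [Real.log_inv, Real.inv_rpow ht.le, ← Real.rpow_neg ht.le] at h
    have h2 : t ^ (-ε) / ε ≤ (t ^ ε + t ^ (-ε)) / ε := by
      gcongr
      linarith [(Real.rpow_pos_of_pos ht ε).le]
    linarith
  · have h := key t ht
    refine h.trans ?_
    gcongr
    linarith [(Real.rpow_pos_of_pos ht (-ε)).le]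

lemma integrableOn_rpow_mul_log_exp {s : ℝ} (hs : 0 < s) :
    IntegrableOn (fun t : ℝ => t ^ (s - 1) * (Real.log t * Real.exp (-t))) (Ioi 0) := by
  have h1 := Real.GammaIntegral_convergent (by positivity : (0:ℝ) < s/2)
  have h2 := Real.GammaIntegral_convergent (by positivity : (0:ℝ) < 3*s/2)
  refine Integrable.mono' ((h2.add h1).const_mul (2/s)) ?_ ?_
  · exact ((by fun_prop : Measurable fun t : ℝ => t ^ (s-1)).mul
      (Real.measurable_log.mul (by fun_prop))).aestronglyMeasurable
  · filter_upwards [ae_restrict_mem measurableSet_Ioi] with t ht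
    have ht : (0:ℝ) < t := ht
    have hb := abs_log_le_rpow ht (by positivity : (0:ℝ) < s/2)
    have e1 : t ^ (s-1) * t ^ (s/2) = t ^ (3*s/2 - 1) := by
      rw [← Real.rpow_add ht]; ring_nf
    have e2 : t ^ (s-1) * t ^ (-(s/2)) = t ^ (s/2 - 1) := by
      rw [← Real.rpow_add ht]; ring_nf
    have hpos1 : (0:ℝ) ≤ t ^ (s-1) := (Real.rpow_pos_of_pos ht _).le
    rw [norm_mul, norm_mul, Real.norm_eq_abs, Real.norm_eq_abs, Real.norm_eq_abs,
      abs_of_nonneg hpos1, abs_of_nonneg (Real.exp_pos _).le]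
    calc t ^ (s-1) * (|Real.log t| * Real.exp (-t))
        ≤ t ^ (s-1) * (((t ^ (s/2) + t ^ (-(s/2))) / (s/2)) * Real.exp (-t)) := by
          apply mul_le_mul_of_nonneg_left ?_ hpos1
          exact mul_le_mul_of_nonneg_right hb (Real.exp_pos _).le
      _ = 2/s * (Real.exp (-t) * t ^ (3*s/2 - 1) + Real.exp (-t) * t ^ (s/2 - 1)) := by
          rw [← e1, ← e2]; field_simp

lemma hasDerivAt_Gamma_real {s : ℝ} (hs : 0 < s) :
    HasDerivAt Real.Gamma (∫ t in Ioi (0:ℝ), t ^ (s - 1) * (Real.log t * Real.exp (-t))) s := by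
  have h0 : 0 < ((s:ℂ)).re := by simpa using hs
  have h1 := Complex.hasDerivAt_GammaIntegral h0
  have h2 : HasDerivAt Complex.Gamma
      (∫ t in Ioi (0:ℝ), (t:ℂ) ^ ((s:ℂ) - 1) * (Real.log t * Real.exp (-t))) s := by
    refine h1.congr_of_eventuallyEq ?_
    have hmem : {z : ℂ | 0 < z.re} ∈ nhds (s:ℂ) :=
      (Complex.continuous_re.isOpen_preimage _ isOpen_Ioi).mem_nhds h0
    filter_upwards [hmem] with z hz
    exact Complex.Gamma_eq_integral hz
  have key : (∫ t in Ioi (0:ℝ), (t:ℂ) ^ ((s:ℂ) - 1) * (Real.log t * Real.exp (-t)))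
      = ((∫ t in Ioi (0:ℝ), t ^ (s - 1) * (Real.log t * Real.exp (-t)) : ℝ) : ℂ) := by
    have cc : ∀ r : ℝ, Complex.ofReal r = @RCLike.ofReal ℂ _ r := fun r => rfl
    calc (∫ t in Ioi (0:ℝ), (t:ℂ) ^ ((s:ℂ) - 1) * (Real.log t * Real.exp (-t)))
        = ∫ t in Ioi (0:ℝ), @RCLike.ofReal ℂ _ (t ^ (s - 1) * (Real.log t * Real.exp (-t))) := by
          refine setIntegral_congr_fun measurableSet_Ioi fun t ht => ?_
          rw [← cc, show ((s:ℂ) - 1) = ((s - 1 : ℝ) : ℂ) by push_cast; ring,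
            ← Complex.ofReal_cpow (le_of_lt ht)]
          push_cast
          ring
      _ = _ := by rw [integral_ofReal, ← cc]
  have h3 := h2.real_of_complex
  rw [key, Complex.ofReal_re] at h3
  exact h3


noncomputable def fp (p x : ℝ) : ℝ :=
  Real.exp (-|x| ^ p / p) / (2 * p ^ (1 / p) * Real.Gamma (1 + 1 / p))

/-- The digamma function `ψ = Γ'/Γ`. -/
noncomputable def digamma (x : ℝ) : ℝ := deriv Real.Gamma x / Real.Gamma x

/-- For a p-generalized Gaussian `Z`, `E[log |Z|] = (ψ(1/p) + log p)/p`. -/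
theorem p_gaussian_log_moment (p : ℝ) (hp : 1 ≤ p) :
    ∫ x : ℝ, Real.log |x| * fp p x = (digamma (1 / p) + Real.log p) / p := by
  have hp0 : 0 < p := zero_lt_one.trans_le hp
  have hs : 0 < 1 / p := by positivity
  have hG : 0 < Real.Gamma (1 / p) := Real.Gamma_pos_of_pos hs
  set D : ℝ := ∫ t in Ioi (0:ℝ), t ^ (1/p - 1) * (Real.log t * Real.exp (-t)) with hD
  set F : ℝ → ℝ := fun t => t ^ (1/p - 1) * (Real.log t * Real.exp (-(t/p))) with hF
  have step1 : ∫ x : ℝ, Real.log |x| * fp p x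
      = (∫ x : ℝ, Real.log |x| * Real.exp (-|x| ^ p / p))
        / (2 * p ^ (1/p) * Real.Gamma (1 + 1/p)) := by
    simp_rw [fp, ← mul_div_assoc]
    rw [integral_div]
  have step2 : (∫ x : ℝ, Real.log |x| * Real.exp (-|x| ^ p / p))
      = 2 * ∫ x in Ioi (0:ℝ), Real.log x * Real.exp (-x ^ p / p) :=
    integral_comp_abs (f := fun y => Real.log y * Real.exp (-y ^ p / p))
  have step3 : (∫ x in Ioi (0:ℝ), Real.log x * Real.exp (-x ^ p / p))
      = (1/p)^2 * ∫ x in Ioi (0:ℝ), F x := by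
    rw [← integral_comp_rpow_Ioi (fun y => Real.log y * Real.exp (-y ^ p / p))
      (one_div_ne_zero hp0.ne'), ← integral_const_mul]
    refine setIntegral_congr_fun measurableSet_Ioi fun x hx => ?_
    have hx : (0:ℝ) < x := hx
    have hxp : (x ^ (1/p)) ^ p = x := by
      rw [← Real.rpow_mul hx.le, one_div_mul_cancel hp0.ne', Real.rpow_one]
    rw [smul_eq_mul, abs_of_pos hs, Real.log_rpow hx, hxp, hF]
    rw [neg_div]
    ring
  have step4 : (∫ x in Ioi (0:ℝ), F x) = p * ∫ x in Ioi (0:ℝ), F (p * x) := by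
    rw [integral_comp_mul_left_Ioi F 0 hp0, mul_zero, smul_eq_mul, ← mul_assoc,
      mul_inv_cancel₀ hp0.ne', one_mul]
  have step5 : (∫ x in Ioi (0:ℝ), F (p * x))
      = p ^ (1/p - 1) * (Real.log p * Real.Gamma (1/p) + D) := by
    have congr1 : ∀ x ∈ Ioi (0:ℝ), F (p * x)
        = p ^ (1/p - 1) * (Real.log p * (Real.exp (-x) * x ^ (1/p - 1))
            + x ^ (1/p - 1) * (Real.log x * Real.exp (-x))) := by
      intro x hx
      have hx : (0:ℝ) < x := hx
      show (p*x) ^ (1/p - 1) * (Real.log (p*x) * Real.exp (-(p*x/p))) = _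
      rw [ Real.mul_rpow hp0.le hx.le, Real.log_mul hp0.ne' hx.ne',
        mul_div_cancel_left₀ x hp0.ne']
      ring
    rw [setIntegral_congr_fun measurableSet_Ioi congr1, integral_const_mul,
      integral_add (((Real.GammaIntegral_convergent hs).const_mul (Real.log p)))
        (integrableOn_rpow_mul_log_exp hs),
      integral_const_mul, ← Real.Gamma_eq_integral hs, ← hD]
  have hderiv : deriv Real.Gamma (1/p) = D := (hasDerivAt_Gamma_real hs).deriv
  rw [step1, step2, step3, step4, step5, digamma, hderiv,
    show (1:ℝ) + 1/p = 1/p + 1 from add_comm _ _,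
    Real.Gamma_add_one hs.ne', Real.rpow_sub hp0, Real.rpow_one]
  have hA : (0:ℝ) < p ^ (1/p) := Real.rpow_pos_of_pos hp0 _
  field_simp
  ring
end

section
/- Let p ∈ [1, ∞) and let Z have density f_p(x) = exp(-|x|^p/p) / (2 p^{1/p} Γ(1 + 1/p)) on ℝ. Then Var(log |Z|) = ψ'(1/p)/p², where ψ' is the trigamma function. -/
/-- The trigamma function `ψ'`. -/
noncomputable def trigamma (x : ℝ) : ℝ := deriv digamma x

open MeasureTheory Set Real Filter Asymptotics
open scoped Topology

lemma mellin_ofReal (g : ℝ → ℝ) (y : ℝ) :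
    mellin (fun t => ((g t : ℝ) : ℂ)) (y : ℂ)
      = ((∫ t in Ioi (0:ℝ), t ^ (y - 1) * g t : ℝ) : ℂ) := by
  have h1 : mellin (fun t => ((g t : ℝ) : ℂ)) (y : ℂ)
      = ∫ t in Ioi (0:ℝ), ((t ^ (y - 1) * g t : ℝ) : ℂ) := by
    refine setIntegral_congr_fun measurableSet_Ioi fun t ht => ?_
    rw [smul_eq_mul, show ((y:ℂ) - 1) = ((y - 1 : ℝ) : ℂ) by push_cast; ring,
      ← Complex.ofReal_cpow (le_of_lt ht), ← Complex.ofReal_mul]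
  rw [h1]
  exact integral_ofReal

lemma hasDerivAt_mellin_real {g : ℝ → ℝ} {x b : ℝ} (hx : 0 < x) (hb : b < x)
    (hc : LocallyIntegrableOn (fun t => ((g t : ℝ) : ℂ)) (Ioi 0))
    (htop : (fun t => ((g t : ℝ) : ℂ)) =O[atTop] (· ^ (-(x+1))))
    (hbot : (fun t => ((g t : ℝ) : ℂ)) =O[𝓝[>] 0] (· ^ (-b))) :
    HasDerivAt (fun y : ℝ => ∫ t in Ioi (0:ℝ), t ^ (y - 1) * g t)
        (∫ t in Ioi (0:ℝ), t ^ (x - 1) * (Real.log t * g t)) x ∧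
      IntegrableOn (fun t => t ^ (x - 1) * (Real.log t * g t)) (Ioi 0) := by
  have hre : ((x:ℂ)).re = x := by simp
  obtain ⟨hconv, hder⟩ := mellin_hasDerivAt_of_isBigO_rpow (s := (x:ℂ)) hc htop
    (by rw [hre]; linarith) hbot (by rw [hre]; exact hb)
  have hsmul : (fun t : ℝ => Real.log t • ((g t : ℝ) : ℂ))
      = fun t : ℝ => ((Real.log t * g t : ℝ) : ℂ) := by
    funext t; rw [Complex.real_smul, Complex.ofReal_mul]
  rw [hsmul] at hconv hder
  constructor
  · have h2 := hder.real_of_complex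
    have heq : (fun y : ℝ => (mellin (fun t => ((g t : ℝ) : ℂ)) (y:ℂ)).re)
        = fun y : ℝ => ∫ t in Ioi (0:ℝ), t ^ (y - 1) * g t := by
      funext y; rw [mellin_ofReal, Complex.ofReal_re]
    rw [heq] at h2
    rwa [mellin_ofReal, Complex.ofReal_re] at h2
  · have h3 := hconv.re
    refine (integrable_congr ?_).mp h3
    refine (ae_restrict_iff' measurableSet_Ioi).mpr (ae_of_all _ fun t ht => ?_)
    simp only [smul_eq_mul]
    rw [show ((x:ℂ) - 1) = ((x - 1 : ℝ) : ℂ) by push_cast; ring,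
      ← Complex.ofReal_cpow (le_of_lt ht), ← Complex.ofReal_mul]
    exact Complex.ofReal_re _

lemma ofReal_isBigO {h g : ℝ → ℝ} {l : Filter ℝ} (H : h =O[l] g) :
    (fun t => ((h t : ℝ) : ℂ)) =O[l] g := by
  rw [← isBigO_norm_left]
  simp only [Complex.norm_real]
  rwa [isBigO_norm_left]

lemma exp_neg_isBigO_atTop (r : ℝ) : (fun t : ℝ => Real.exp (-t)) =O[atTop] (· ^ r) := by
  simpa only [neg_one_mul] using (isLittleO_exp_neg_mul_rpow_atTop zero_lt_one r).isBigO

lemma exp_neg_isBigO_zero : (fun t : ℝ => Real.exp (-t)) =O[𝓝[>] (0:ℝ)] (fun _ => (1:ℝ)) := by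
  have h : Filter.Tendsto (fun t : ℝ => Real.exp (-t)) (𝓝 0) (𝓝 1) := by
    have := (Real.continuous_exp.comp continuous_neg).tendsto 0
    simpa [Function.comp_def] using this
  exact isBigO_const_of_tendsto (h.mono_left nhdsWithin_le_nhds) one_ne_zero

lemma logexp_isBigO_atTop {x : ℝ} : (fun t : ℝ => Real.log t * Real.exp (-t))
    =O[atTop] (· ^ (-(x+1))) := by
  have l1 : Real.log =o[atTop] (· ^ (1:ℝ)) := isLittleO_log_rpow_atTop one_pos
  have l2 : (fun t : ℝ => Real.exp (-t)) =O[atTop] (· ^ (-(x+2))) := exp_neg_isBigO_atTop _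
  have l3 := (l1.mul_isBigO l2).isBigO
  refine l3.congr' (Eventually.of_forall fun t => rfl) ?_
  filter_upwards [eventually_gt_atTop (0:ℝ)] with t ht
  rw [← Real.rpow_add ht]
  ring_nf

lemma logexp_isBigO_zero {x : ℝ} (hx : 0 < x) : (fun t : ℝ => Real.log t * Real.exp (-t))
    =O[𝓝[>] (0:ℝ)] (· ^ (-(x/2))) := by
  have l1 : Real.log =o[𝓝[>] (0:ℝ)] (· ^ (-(x/2))) := isLittleO_log_rpow_nhdsGT_zero (by linarith)
  have l3 := (l1.isBigO.mul exp_neg_isBigO_zero)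
  refine l3.congr' (Eventually.of_forall fun t => rfl) (Eventually.of_forall fun t => ?_)
  simp

noncomputable def GG1 (x : ℝ) : ℝ :=
  ∫ t in Ioi (0:ℝ), t ^ (x - 1) * (Real.log t * Real.exp (-t))

noncomputable def GG2 (x : ℝ) : ℝ :=
  ∫ t in Ioi (0:ℝ), t ^ (x - 1) * (Real.log t * (Real.log t * Real.exp (-t)))

lemma level1 {x : ℝ} (hx : 0 < x) :
    HasDerivAt (fun y : ℝ => ∫ t in Ioi (0:ℝ), t ^ (y - 1) * Real.exp (-t)) (GG1 x) x ∧
      IntegrableOn (fun t => t ^ (x - 1) * (Real.log t * Real.exp (-t))) (Ioi 0) := by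
  refine hasDerivAt_mellin_real (b := 0) hx hx ?_ ?_ ?_
  · refine (Continuous.continuousOn ?_).locallyIntegrableOn measurableSet_Ioi
    exact Complex.continuous_ofReal.comp (Real.continuous_exp.comp continuous_neg)
  · exact ofReal_isBigO (exp_neg_isBigO_atTop _)
  · refine ofReal_isBigO ?_
    refine exp_neg_isBigO_zero.congr' (Eventually.of_forall fun t => rfl)
      (Eventually.of_forall fun t => ?_)
    simp

lemma level2 {x : ℝ} (hx : 0 < x) :
    HasDerivAt GG1 (GG2 x) x ∧
      IntegrableOn (fun t => t ^ (x - 1) * (Real.log t * (Real.log t * Real.exp (-t))))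
        (Ioi 0) := by
  refine hasDerivAt_mellin_real (b := x/2) hx (by linarith) ?_ ?_ ?_
  · refine ContinuousOn.locallyIntegrableOn ?_ measurableSet_Ioi
    refine Complex.continuous_ofReal.comp_continuousOn (ContinuousOn.mul ?_ ?_)
    · exact Real.continuousOn_log.mono fun t ht => ne_of_gt ht
    · exact (Real.continuous_exp.comp continuous_neg).continuousOn
  · exact ofReal_isBigO logexp_isBigO_atTop
  · exact ofReal_isBigO (logexp_isBigO_zero hx)

lemma Gamma_integral_eq {x : ℝ} (hx : 0 < x) :
    Real.Gamma x = ∫ t in Ioi (0:ℝ), t ^ (x - 1) * Real.exp (-t) := by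
  rw [Real.Gamma_eq_integral hx]
  exact setIntegral_congr_fun measurableSet_Ioi fun t _ => mul_comm _ _

lemma hasDerivAt_Gamma' {x : ℝ} (hx : 0 < x) : HasDerivAt Real.Gamma (GG1 x) x := by
  refine ((level1 hx).1).congr_of_eventuallyEq ?_
  filter_upwards [Ioi_mem_nhds hx] with y hy
  exact Gamma_integral_eq hy

lemma trigamma_eq {x : ℝ} (hx : 0 < x) :
    trigamma x = (GG2 x * Real.Gamma x - GG1 x ^ 2) / Real.Gamma x ^ 2 := by
  have hΓ := Real.Gamma_pos_of_pos hx
  have hdiv : HasDerivAt (fun y => GG1 y / Real.Gamma y)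
      ((GG2 x * Real.Gamma x - GG1 x * GG1 x) / Real.Gamma x ^ 2) x :=
    (level2 hx).1.div (hasDerivAt_Gamma' hx) hΓ.ne'
  have hev : digamma =ᶠ[𝓝 x] fun y => GG1 y / Real.Gamma y := by
    filter_upwards [Ioi_mem_nhds hx] with y hy
    rw [digamma, (hasDerivAt_Gamma' hy).deriv]
  rw [trigamma, hev.deriv_eq, hdiv.deriv]
  ring

lemma substB (φ : ℝ → ℝ) {p : ℝ} (hp : 0 < p) (c : ℝ) :
    (∫ t in Ioi (0:ℝ), φ (Real.log t) * (Real.exp (-t ^ p / p) / c))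
      = ∫ y in Ioi (0:ℝ), (y ^ (1/p - 1) * φ (Real.log y / p) * Real.exp (-(y/p))) / (p * c) := by
  rw [← integral_comp_rpow_Ioi_of_pos
    (g := fun y => (y ^ (1/p - 1) * φ (Real.log y / p) * Real.exp (-(y/p))) / (p * c)) hp]
  refine setIntegral_congr_fun measurableSet_Ioi fun x hx => ?_
  have hx' : (0:ℝ) < x := hx
  have h1 : Real.log (x ^ p) = p * Real.log x := Real.log_rpow hx' p
  have h2 : (x ^ p) ^ (1/p - 1) = x ^ (1 - p) := by
    rw [← Real.rpow_mul hx'.le]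
    congr 1
    field_simp
  have h3 : x ^ (p - 1) * x ^ (1 - p) = 1 := by
    rw [← Real.rpow_add hx']
    norm_num
  rw [smul_eq_mul, h1, h2, mul_div_cancel_left₀ _ hp.ne', neg_div]
  have e1 : p * x ^ (p-1) * (x ^ (1-p) * φ (Real.log x) * Real.exp (-(x ^ p / p)) / (p * c))
      = p * (x ^ (p-1) * x ^ (1-p) * (φ (Real.log x) * Real.exp (-(x ^ p / p)))) / (p * c) := by
    ring
  rw [e1, h3, one_mul, mul_div_mul_left _ _ hp.ne', mul_div_assoc]

lemma substC (φ : ℝ → ℝ) {p : ℝ} (hp : 0 < p) (c : ℝ) :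
    (∫ y in Ioi (0:ℝ), (y ^ (1/p - 1) * φ (Real.log y / p) * Real.exp (-(y/p))) / (p * c))
      = p * ∫ u in Ioi (0:ℝ),
          (p ^ (1/p - 1) * (u ^ (1/p - 1) * φ ((Real.log p + Real.log u) / p) * Real.exp (-u)))
            / (p * c) := by
  have h := integral_comp_mul_left_Ioi
    (fun y => (y ^ (1/p - 1) * φ (Real.log y / p) * Real.exp (-(y/p))) / (p * c)) 0 hp
  rw [mul_zero, smul_eq_mul] at h
  have h2 : (∫ y in Ioi (0:ℝ), (y ^ (1/p-1) * φ (Real.log y / p) * Real.exp (-(y/p))) / (p*c))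
      = p * ∫ u in Ioi (0:ℝ),
          ((p*u) ^ (1/p-1) * φ (Real.log (p*u) / p) * Real.exp (-((p*u)/p))) / (p*c) := by
    rw [h, ← mul_assoc, mul_inv_cancel₀ hp.ne', one_mul]
  rw [h2]
  congr 1
  refine setIntegral_congr_fun measurableSet_Ioi fun u hu => ?_
  have hu' : (0:ℝ) < u := hu
  rw [Real.mul_rpow hp.le hu'.le, Real.log_mul hp.ne' hu'.ne', mul_div_cancel_left₀ _ hp.ne']
  ring

/-- For a p-generalized Gaussian `Z`, `Var(log |Z|) = ψ'(1/p)/p²`. -/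
theorem p_gaussian_var_log (p : ℝ) (hp : 1 ≤ p) :
    (∫ x : ℝ, (Real.log |x|) ^ 2 * fp p x) - (∫ x : ℝ, Real.log |x| * fp p x) ^ 2
      = trigamma (1 / p) / p ^ 2 := by
  have hp0 : 0 < p := lt_of_lt_of_le one_pos hp
  have ha : 0 < 1 / p := by positivity
  have hΓa : 0 < Real.Gamma (1 / p) := Real.Gamma_pos_of_pos ha
  set c := 2 * p ^ (1 / p) * Real.Gamma (1 + 1 / p) with hcdef
  have hc : c ≠ 0 := by
    have h1 : (0:ℝ) < Real.Gamma (1 + 1 / p) := Real.Gamma_pos_of_pos (by positivity)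
    have h2 : (0:ℝ) < p ^ (1 / p) := Real.rpow_pos_of_pos hp0 _
    positivity
  have hfp : ∀ x : ℝ, fp p x = Real.exp (-|x| ^ p / p) / c := fun x => by
    simp only [fp, hcdef]
  -- Step 1: reduce to integrals over Ioi 0
  have habs2 : (∫ x : ℝ, (Real.log |x|) ^ 2 * fp p x)
      = 2 * ∫ t in Ioi (0:ℝ), (Real.log t) ^ 2 * (Real.exp (-t ^ p / p) / c) := by
    rw [show (fun x : ℝ => (Real.log |x|) ^ 2 * fp p x)
        = fun x : ℝ => (fun t : ℝ => (Real.log t) ^ 2 * (Real.exp (-t ^ p / p) / c)) |x| by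
      funext x; simp only [hfp x]]
    exact integral_comp_abs (f := fun t : ℝ => (Real.log t) ^ 2 * (Real.exp (-t ^ p / p) / c))
  have habs1 : (∫ x : ℝ, Real.log |x| * fp p x)
      = 2 * ∫ t in Ioi (0:ℝ), Real.log t * (Real.exp (-t ^ p / p) / c) := by
    rw [show (fun x : ℝ => Real.log |x| * fp p x)
        = fun x : ℝ => (fun t : ℝ => Real.log t * (Real.exp (-t ^ p / p) / c)) |x| by
      funext x; simp only [hfp x]]
    exact integral_comp_abs (f := fun t : ℝ => Real.log t * (Real.exp (-t ^ p / p) / c))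
  -- Step 2: substitution
  have sB2 : (∫ t in Ioi (0:ℝ), (Real.log t) ^ 2 * (Real.exp (-t ^ p / p) / c))
      = ∫ y in Ioi (0:ℝ),
          (y ^ (1/p - 1) * (Real.log y / p) ^ 2 * Real.exp (-(y/p))) / (p * c) :=
    substB (fun s => s ^ 2) hp0 c
  have sB1 : (∫ t in Ioi (0:ℝ), Real.log t * (Real.exp (-t ^ p / p) / c))
      = ∫ y in Ioi (0:ℝ),
          (y ^ (1/p - 1) * (Real.log y / p) * Real.exp (-(y/p))) / (p * c) :=
    substB (fun s => s) hp0 c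
  have sC2 : (∫ y in Ioi (0:ℝ),
          (y ^ (1/p - 1) * (Real.log y / p) ^ 2 * Real.exp (-(y/p))) / (p * c))
      = p * ∫ u in Ioi (0:ℝ),
          (p ^ (1/p - 1) * (u ^ (1/p - 1) * ((Real.log p + Real.log u) / p) ^ 2
            * Real.exp (-u))) / (p * c) :=
    substC (fun s => s ^ 2) hp0 c
  have sC1 : (∫ y in Ioi (0:ℝ),
          (y ^ (1/p - 1) * (Real.log y / p) * Real.exp (-(y/p))) / (p * c))
      = p * ∫ u in Ioi (0:ℝ),
          (p ^ (1/p - 1) * (u ^ (1/p - 1) * ((Real.log p + Real.log u) / p)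
            * Real.exp (-u))) / (p * c) :=
    substC (fun s => s) hp0 c
  -- Step 3: expand into Gamma-type integrals
  have hI0 : IntegrableOn (fun u : ℝ => u ^ (1/p - 1) * Real.exp (-u)) (Ioi 0) := by
    refine (integrable_congr ?_).mp (Real.GammaIntegral_convergent ha)
    exact (ae_restrict_iff' measurableSet_Ioi).mpr (ae_of_all _ fun t _ => mul_comm _ _)
  have hI1 := (level1 ha).2
  have hI2 := (level2 ha).2
  have hval0 : (∫ u in Ioi (0:ℝ), u ^ (1/p - 1) * Real.exp (-u)) = Real.Gamma (1/p) :=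
    (Gamma_integral_eq ha).symm
  have exp1 : (∫ u in Ioi (0:ℝ),
        (p ^ (1/p - 1) * (u ^ (1/p - 1) * ((Real.log p + Real.log u) / p)
          * Real.exp (-u))) / (p * c))
      = (p ^ (1/p - 1) / (p * c)) *
          ((Real.log p / p) * Real.Gamma (1/p) + (1/p) * GG1 (1/p)) := by
    rw [show (fun u : ℝ => (p ^ (1/p - 1) * (u ^ (1/p - 1) * ((Real.log p + Real.log u) / p)
          * Real.exp (-u))) / (p * c))
        = fun u : ℝ => (p ^ (1/p - 1) / (p * c)) *
            ((Real.log p / p) * (u ^ (1/p - 1) * Real.exp (-u))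
              + (1/p) * (u ^ (1/p - 1) * (Real.log u * Real.exp (-u)))) by
      funext u; ring]
    rw [integral_const_mul _, integral_add (hI0.const_mul _) (hI1.const_mul _),
      integral_const_mul _, integral_const_mul _, hval0, GG1]
  have exp2 : (∫ u in Ioi (0:ℝ),
        (p ^ (1/p - 1) * (u ^ (1/p - 1) * ((Real.log p + Real.log u) / p) ^ 2
          * Real.exp (-u))) / (p * c))
      = (p ^ (1/p - 1) / (p * c)) *
          ((Real.log p ^ 2 / p ^ 2) * Real.Gamma (1/p)
            + (2 * Real.log p / p ^ 2) * GG1 (1/p) + (1 / p ^ 2) * GG2 (1/p)) := by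
    rw [show (fun u : ℝ => (p ^ (1/p - 1) * (u ^ (1/p - 1)
            * ((Real.log p + Real.log u) / p) ^ 2 * Real.exp (-u))) / (p * c))
        = fun u : ℝ => (p ^ (1/p - 1) / (p * c)) *
            ((Real.log p ^ 2 / p ^ 2) * (u ^ (1/p - 1) * Real.exp (-u))
              + (2 * Real.log p / p ^ 2) * (u ^ (1/p - 1) * (Real.log u * Real.exp (-u)))
              + (1 / p ^ 2) * (u ^ (1/p - 1) * (Real.log u * (Real.log u * Real.exp (-u))))) by
      funext u; ring]
    have hAB : Integrable (fun u : ℝ =>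
        Real.log p ^ 2 / p ^ 2 * (u ^ (1/p - 1) * Real.exp (-u))
          + 2 * Real.log p / p ^ 2 * (u ^ (1/p - 1) * (Real.log u * Real.exp (-u))))
        (volume.restrict (Ioi 0)) := (hI0.const_mul _).add (hI1.const_mul _)
    rw [integral_const_mul _,
      integral_add hAB (hI2.const_mul _),
      integral_add (hI0.const_mul _) (hI1.const_mul _),
      integral_const_mul _, integral_const_mul _, integral_const_mul _, hval0, GG1, GG2]
  -- Step 4: put everything together
  rw [habs2, habs1, sB2, sB1, sC2, sC1, exp1, exp2, trigamma_eq ha]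
  have hΓ1 : Real.Gamma (1 + 1/p) = (1/p) * Real.Gamma (1/p) := by
    rw [add_comm, Real.Gamma_add_one ha.ne']
  have hP : p ^ (1/p - 1) = p ^ (1/p) / p := by
    rw [Real.rpow_sub hp0, Real.rpow_one]
  rw [hcdef, hΓ1, hP]
  have hPp : (0:ℝ) < p ^ (1/p) := Real.rpow_pos_of_pos hp0 _
  field_simp
  ring
end

section
/- Let p ∈ [1, ∞), s > -1, t < 1/p, and let Z have density f_p(x) = exp(-|x|^p/p)/(2 p^{1/p} Γ(1+1/p)) on ℝ. Then log E[exp(s·log|Z| + t·|Z|^p)] = -(1/p) log(1 - pt) + (s/p)(log p - log(1 - pt)) + log Γ((s+1)/p) - log Γ(1/p). -/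
/-- The cumulant generating function of `(log |Z|, |Z|^p)` for a p-generalized Gaussian `Z`. -/
theorem p_gaussian_cgf (p : ℝ) (hp : 1 ≤ p) (s t : ℝ) (hs : -1 < s) (ht : t < 1 / p) :
    Real.log (∫ x : ℝ, Real.exp (s * Real.log |x| + t * |x| ^ p) * fp p x)
      = -(1 / p) * Real.log (1 - p * t) + (s / p) * (Real.log p - Real.log (1 - p * t))
        + Real.log (Real.Gamma ((s + 1) / p)) - Real.log (Real.Gamma (1 / p)) := by
  have hp0 : 0 < p := lt_of_lt_of_le one_pos hp
  set a : ℝ := 1 / p - t with ha_def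
  have ha : 0 < a := sub_pos.mpr ht
  set C : ℝ := 2 * p ^ (1 / p) * Real.Gamma (1 + 1 / p) with hC_def
  have hΓp : 0 < Real.Gamma (1 + 1 / p) := Real.Gamma_pos_of_pos (by positivity)
  have hC : 0 < C := by positivity
  have h1 : 0 < 1 - p * t := by
    nlinarith [mul_pos ha hp0, one_div_mul_cancel hp0.ne']
  have hΓs : 0 < Real.Gamma ((s + 1) / p) := Real.Gamma_pos_of_pos (by
    apply div_pos (by linarith) hp0)
  have hΓ1p : 0 < Real.Gamma (1 / p) := Real.Gamma_pos_of_pos (by positivity)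
  -- Step 1: rewrite the integrand a.e.
  have hcongr : (∫ x : ℝ, Real.exp (s * Real.log |x| + t * |x| ^ p) * fp p x)
      = ∫ x : ℝ, (fun y : ℝ => y ^ s * Real.exp (-a * y ^ p) / C) |x| := by
    refine MeasureTheory.integral_congr_ae ?_
    have h0 : ∀ᵐ x : ℝ, x ≠ 0 := by
      rw [MeasureTheory.ae_iff]
      simp [Set.setOf_eq_eq_singleton]
    filter_upwards [h0] with x hx
    have hax : 0 < |x| := abs_pos.mpr hx
    simp only [fp]
    have hxs : |x| ^ s = Real.exp (s * Real.log |x|) := by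
      rw [Real.rpow_def_of_pos hax, mul_comm]
    have hexp : Real.exp (-a * |x| ^ p) = Real.exp (t * |x| ^ p) * Real.exp (-|x| ^ p / p) := by
      rw [← Real.exp_add]; congr 1; rw [ha_def]; field_simp; ring
    rw [Real.exp_add, hxs, hexp]; ring
  rw [hcongr, integral_comp_abs (f := fun y : ℝ => y ^ s * Real.exp (-a * y ^ p) / C)]
  have hint : (∫ x in Set.Ioi (0:ℝ), x ^ s * Real.exp (-a * x ^ p) / C)
      = (a ^ (-(s + 1) / p) * (1 / p) * Real.Gamma ((s + 1) / p)) / C := by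
    rw [MeasureTheory.integral_div, integral_rpow_mul_exp_neg_mul_rpow hp0 hs ha]
  rw [hint]
  have hΓ : Real.Gamma (1 + 1 / p) = (1 / p) * Real.Gamma (1 / p) := by
    rw [add_comm, Real.Gamma_add_one (by positivity)]
  have hloga : Real.log a = Real.log (1 - p * t) - Real.log p := by
    have : a = (1 - p * t) / p := by rw [ha_def]; field_simp
    rw [this, Real.log_div h1.ne' hp0.ne']
  rw [hC_def, hΓ]
  have hval : 2 * (a ^ (-(s + 1) / p) * (1 / p) * Real.Gamma ((s + 1) / p)
        / (2 * p ^ (1 / p) * (1 / p * Real.Gamma (1 / p))))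
      = a ^ (-(s + 1) / p) * Real.Gamma ((s + 1) / p)
        / (p ^ (1 / p) * Real.Gamma (1 / p)) := by
    have hpp : (0:ℝ) < p ^ (1 / p) := by positivity
    field_simp
  rw [hval, Real.log_div (by positivity) (by positivity),
    Real.log_mul (by positivity) hΓs.ne',
    Real.log_mul (by positivity) hΓ1p.ne',
    Real.log_rpow ha, Real.log_rpow hp0, hloga]
  ring
end

section
/- Let p ∈ [1, ∞) and let Z have density f_p as above. If s ≤ -1 or t ≥ 1/p, then E[exp(s·log|Z| + t·|Z|^p)] = +∞, i.e. the effective domain of the cumulant generating function Λ of (log|Z|, |Z|^p) is exactly (-1, ∞) × (-∞, 1/p). -/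
open MeasureTheory Set

private lemma lint_Ioi_top : ∫⁻ x in Ioi (1:ℝ), ENNReal.ofReal (x ^ (-1:ℝ)) = ⊤ := by
  by_contra hfin
  have hm : Measurable fun x : ℝ => x ^ (-1:ℝ) := by fun_prop
  have hint : IntegrableOn (fun x : ℝ => x ^ (-1:ℝ)) (Ioi 1) := by
    refine ⟨hm.aestronglyMeasurable.restrict, ?_⟩
    rw [hasFiniteIntegral_iff_ofReal ?_]
    · exact Ne.lt_top hfin
    · filter_upwards [ae_restrict_mem measurableSet_Ioi] with x hx
      exact Real.rpow_nonneg (by linarith [mem_Ioi.1 hx]) _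
  rw [integrableOn_Ioi_rpow_iff zero_lt_one] at hint
  linarith

private lemma lint_Ioo_top : ∫⁻ x in Ioo (0:ℝ) 1, ENNReal.ofReal (x ^ (-1:ℝ)) = ⊤ := by
  by_contra hfin
  have hm : Measurable fun x : ℝ => x ^ (-1:ℝ) := by fun_prop
  have hint : IntegrableOn (fun x : ℝ => x ^ (-1:ℝ)) (Ioo 0 1) := by
    refine ⟨hm.aestronglyMeasurable.restrict, ?_⟩
    rw [hasFiniteIntegral_iff_ofReal ?_]
    · exact Ne.lt_top hfin
    · filter_upwards [ae_restrict_mem measurableSet_Ioo] with x hx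
      exact Real.rpow_nonneg (mem_Ioo.1 hx).1.le _
  rw [intervalIntegral.integrableOn_Ioo_rpow_iff zero_lt_one] at hint
  linarith

/-- Outside `(-1,∞) × (-∞, 1/p)` the moment generating function of `(log|Z|, |Z|^p)`
is infinite. -/
theorem p_gaussian_cgf_domain (p : ℝ) (hp : 1 ≤ p) (s t : ℝ) (h : s ≤ -1 ∨ 1 / p ≤ t) :
    (∫⁻ x : ℝ, ENNReal.ofReal (Real.exp (s * Real.log |x| + t * |x| ^ p) * fp p x)) = ⊤ := by
  have hp0 : 0 < p := lt_of_lt_of_le zero_lt_one hp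
  set C : ℝ := 2 * p ^ (1 / p) * Real.Gamma (1 + 1 / p) with hCdef
  have hC : 0 < C := by
    have h1 : (0:ℝ) < p ^ (1 / p) := Real.rpow_pos_of_pos hp0 _
    have h2 : (0:ℝ) < Real.Gamma (1 + 1 / p) := Real.Gamma_pos_of_pos (by positivity)
    positivity
  have hmeas : Measurable fun x : ℝ =>
      ENNReal.ofReal (Real.exp (s * Real.log |x| + t * |x| ^ p) * fp p x) := by
    unfold fp; measurability
  -- main pointwise bound machinery
  have key : ∀ (S : Set ℝ) (_ : MeasurableSet S) (c : ℝ) (_ : 0 < c),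
      (∀ x ∈ S, c * x ^ (-1:ℝ) ≤ Real.exp (s * Real.log |x| + t * |x| ^ p) * fp p x) →
      (∫⁻ x in S, ENNReal.ofReal (x ^ (-1:ℝ))) = ⊤ →
      (∫⁻ x : ℝ, ENNReal.ofReal (Real.exp (s * Real.log |x| + t * |x| ^ p) * fp p x)) = ⊤ := by
    intro S hS c hc hbd htop
    have h1 : (∫⁻ x in S, ENNReal.ofReal (c * x ^ (-1:ℝ)))
        ≤ ∫⁻ x : ℝ, ENNReal.ofReal (Real.exp (s * Real.log |x| + t * |x| ^ p) * fp p x) := by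
      refine le_trans ?_ (setLIntegral_le_lintegral S _)
      exact setLIntegral_mono hmeas fun x hx => ENNReal.ofReal_le_ofReal (hbd x hx)
    have h2 : (∫⁻ x in S, ENNReal.ofReal (c * x ^ (-1:ℝ))) = ⊤ := by
      have : (fun x : ℝ => ENNReal.ofReal (c * x ^ (-1:ℝ)))
          = fun x : ℝ => ENNReal.ofReal c * ENNReal.ofReal (x ^ (-1:ℝ)) := by
        funext x; rw [ENNReal.ofReal_mul hc.le]
      rw [this, lintegral_const_mul' _ _ ENNReal.ofReal_ne_top, htop,
        ENNReal.mul_top (by simpa using hc)]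
    exact top_le_iff.mp (h2 ▸ h1)
  -- rewrite integrand on positive x
  have hval : ∀ x : ℝ, 0 < x →
      Real.exp (s * Real.log |x| + t * |x| ^ p) * fp p x
        = Real.exp (s * Real.log x + (t - 1 / p) * x ^ p) / C := by
    intro x hx
    rw [fp, abs_of_pos hx, ← hCdef, ← mul_div_assoc, ← Real.exp_add]
    congr 1
    ring
  by_cases hs : s ≤ -1
  · -- blow-up at 0
    refine key (Ioo 0 1) measurableSet_Ioo (Real.exp (-|t - 1/p|) / C)
      (by positivity) ?_ lint_Ioo_top
    intro x hx
    obtain ⟨hx0, hx1⟩ := hx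
    rw [hval x hx0, Real.rpow_def_of_pos hx0, div_mul_eq_mul_div, ← Real.exp_add,
      div_le_div_iff_of_pos_right hC, Real.exp_le_exp]
    have hlog : Real.log x ≤ 0 := Real.log_nonpos hx0.le hx1.le
    have hxp0 : (0:ℝ) ≤ x ^ p := Real.rpow_nonneg hx0.le _
    have hxp1 : x ^ p ≤ 1 := Real.rpow_le_one hx0.le hx1.le hp0.le
    have habs : -|t - 1/p| ≤ t - 1/p := neg_abs_le _
    have habs' : t - 1/p ≤ |t - 1/p| := le_abs_self _
    nlinarith [mul_nonneg (neg_nonneg.mpr hlog) (neg_nonneg.mpr (by linarith : s + 1 ≤ 0)),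
      mul_nonneg (abs_nonneg (t - 1/p)) (by linarith : (0:ℝ) ≤ 1 - x ^ p),
      mul_le_mul_of_nonneg_right habs hxp0]
  · -- blow-up at infinity
    push_neg at hs
    have ht : 1 / p ≤ t := h.resolve_left (not_le.mpr hs)
    refine key (Ioi 1) measurableSet_Ioi (1 / C) (by positivity) ?_ lint_Ioi_top
    intro x hx
    have hx1 : (1:ℝ) < x := mem_Ioi.1 hx
    have hx0 : (0:ℝ) < x := lt_trans zero_lt_one hx1
    rw [hval x hx0, Real.rpow_def_of_pos hx0, div_mul_eq_mul_div, one_mul,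
      div_le_div_iff_of_pos_right hC, Real.exp_le_exp]
    have hlog : 0 ≤ Real.log x := Real.log_nonneg hx1.le
    have hxp0 : (0:ℝ) ≤ x ^ p := Real.rpow_nonneg hx0.le _
    nlinarith [mul_nonneg hlog (by linarith : (0:ℝ) ≤ s + 1),
      mul_nonneg (by linarith : (0:ℝ) ≤ t - 1/p) hxp0]
end

section
/- For all x > 0, ψ(x) - log x = -∫_0^∞ e^{-tx} (1/(1 - e^{-t}) - 1/t) dt, where ψ is the digamma function. -/
open Real MeasureTheory Set Filter Topology intervalIntegral

namespace DigammaAux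

/-- The integrand auxiliary function. -/
noncomputable def g (t : ℝ) : ℝ := 1 / (1 - rexp (-t)) - 1 / t

lemma one_sub_exp_pos {t : ℝ} (ht : 0 < t) : 0 < 1 - rexp (-t) := by
  have := exp_lt_one_iff.mpr (neg_lt_zero.mpr ht)
  linarith

lemma one_sub_exp_le {t : ℝ} : 1 - rexp (-t) ≤ t := by
  have := add_one_le_exp (-t)
  linarith

lemma g_nonneg {t : ℝ} (ht : 0 < t) : 0 ≤ g t := by
  have h1 := one_sub_exp_pos ht
  have h2 : 1 / t ≤ 1 / (1 - rexp (-t)) :=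
    one_div_le_one_div_of_le h1 one_sub_exp_le
  simpa [g, sub_nonneg] using h2

lemma g_le_one {t : ℝ} (ht : 0 < t) : g t ≤ 1 := by
  have h1 := one_sub_exp_pos ht
  have he : rexp (-t) * rexp t = 1 := by rw [← exp_add]; simp
  have h2 : (t + 1) * rexp (-t) ≤ 1 := by
    nlinarith [add_one_le_exp t, (exp_pos (-t)).le]
  have h3 : 1 / (1 - rexp (-t)) ≤ (t + 1) / t := by
    rw [div_le_div_iff₀ h1 ht]
    nlinarith
  have : g t ≤ (t + 1) / t - 1 / t := by
    simpa [g] using sub_le_sub_right h3 (1 / t)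
  calc g t ≤ (t + 1) / t - 1 / t := this
    _ = 1 := by field_simp; ring

lemma continuousOn_g : ContinuousOn g (Ioi 0) := by
  apply ContinuousOn.sub
  · exact continuousOn_const.div (Continuous.continuousOn (by continuity))
      (fun t ht => (one_sub_exp_pos ht).ne')
  · exact continuousOn_const.div continuousOn_id (fun t ht => (ne_of_gt ht))


lemma integrable_exp_neg_mul {x : ℝ} (hx : 0 < x) :
    IntegrableOn (fun t => rexp (-(t * x))) (Ioi (0:ℝ)) := by
  simpa [mul_comm, neg_mul] using exp_neg_integrableOn_Ioi 0 hx

lemma integral_exp_neg_mul {x : ℝ} (hx : 0 < x) :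
    ∫ t in Ioi (0:ℝ), rexp (-(t * x)) = 1 / x := by
  have h := integral_comp_mul_right_Ioi (fun u => rexp (-u)) 0 hx
  simp only [zero_mul] at h
  rw [h, integral_exp_neg_Ioi_zero, smul_eq_mul, mul_one, one_div]

lemma inner_eq {a b t : ℝ} (hab : a ≤ b) (ht : t ≠ 0) :
    ∫ s in Ioc a b, rexp (-(s * t)) = (rexp (-(a * t)) - rexp (-(b * t))) / t := by
  have hder : ∀ s : ℝ, HasDerivAt (fun s => -(rexp (-(s * t)) / t)) (rexp (-(s * t))) s := by
    intro s
    have h1 : HasDerivAt (fun s : ℝ => -(s * t)) (-t) s := (hasDerivAt_mul_const t).neg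
    have h2 := (h1.exp).div_const t
    have h3 := h2.neg
    rw [mul_neg, neg_div, neg_neg, mul_div_assoc, div_self ht, mul_one] at h3
    exact h3
  rw [← intervalIntegral.integral_of_le hab,
    intervalIntegral.integral_eq_sub_of_hasDerivAt (fun s _ => hder s)
      ((Real.continuous_exp.comp (by continuity)).intervalIntegrable a b)]
  ring

lemma frullani_setup {a b : ℝ} (ha : 0 < a) (hab : a ≤ b) :
    Integrable (fun p : ℝ × ℝ => rexp (-(p.1 * p.2)))
      ((volume.restrict (Ioc a b)).prod (volume.restrict (Ioi 0))) := by
  have hmeas : AEStronglyMeasurable (fun p : ℝ × ℝ => rexp (-(p.1 * p.2)))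
      ((volume.restrict (Ioc a b)).prod (volume.restrict (Ioi 0))) :=
    (Real.continuous_exp.comp (by continuity)).aestronglyMeasurable
  rw [MeasureTheory.integrable_prod_iff hmeas]
  constructor
  · filter_upwards [ae_restrict_mem measurableSet_Ioc] with s hs
    exact integrable_exp_neg_mul (ha.trans hs.1) |>.congr_fun
      (fun t _ => by rw [mul_comm]) measurableSet_Ioi
  · refine MeasureTheory.Integrable.congr (f := fun s : ℝ => 1 / s) ?_ ?_
    · have h1 : IntegrableOn (fun s : ℝ => 1 / s) (Icc a b) :=
        (continuousOn_const.div continuousOn_id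
          (fun s hs => (ha.trans_le hs.1).ne')).integrableOn_compact isCompact_Icc
      exact h1.mono Ioc_subset_Icc_self le_rfl
    · symm
      filter_upwards [ae_restrict_mem measurableSet_Ioc] with s hs
      have hs0 : (0:ℝ) < s := ha.trans hs.1
      have : ∫ t in Ioi (0:ℝ), ‖rexp (-(s*t))‖ = ∫ t in Ioi (0:ℝ), rexp (-(t*s)) := by
        congr 1; ext t; rw [norm_of_nonneg (exp_pos _).le, mul_comm]
      rw [this, integral_exp_neg_mul hs0]
      

lemma frullani_integrable {a b : ℝ} (ha : 0 < a) (hab : a ≤ b) :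
    IntegrableOn (fun t => (rexp (-(a * t)) - rexp (-(b * t))) / t) (Ioi (0:ℝ)) := by
  have h := (frullani_setup ha hab).integral_prod_right
  refine h.congr ?_
  filter_upwards [ae_restrict_mem measurableSet_Ioi] with t ht
  exact (inner_eq hab (ne_of_gt ht)).symm ▸ rfl

lemma frullani {a b : ℝ} (ha : 0 < a) (hab : a ≤ b) :
    ∫ t in Ioi (0:ℝ), (rexp (-(a * t)) - rexp (-(b * t))) / t = log b - log a := by
  have hswap := MeasureTheory.integral_integral_swap
    (f := fun s t : ℝ => rexp (-(s * t))) (μ := volume.restrict (Ioc a b))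
    (ν := volume.restrict (Ioi 0)) (frullani_setup ha hab)
  have hL : ∫ s in Ioc a b, (∫ t in Ioi (0:ℝ), rexp (-(s * t))) = log b - log a := by
    rw [setIntegral_congr_fun measurableSet_Ioc
      (fun s hs => by
        have hs0 : (0:ℝ) < s := ha.trans hs.1
        show (∫ t in Ioi (0:ℝ), rexp (-(s * t))) = 1 / s
        rw [show (fun t => rexp (-(s*t))) = fun t => rexp (-(t*s)) by ext t; rw [mul_comm],
          integral_exp_neg_mul hs0])]
    have h0 : (0:ℝ) ∉ Set.uIcc a b := by
      rw [Set.uIcc_of_le hab]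
      exact fun h => absurd h.1 (by linarith)
    rw [← intervalIntegral.integral_of_le hab, integral_one_div h0,
      log_div (by linarith) ha.ne']
  have hR : ∫ t in Ioi (0:ℝ), (∫ s in Ioc a b, rexp (-(s * t)))
      = ∫ t in Ioi (0:ℝ), (rexp (-(a * t)) - rexp (-(b * t))) / t := by
    refine setIntegral_congr_fun measurableSet_Ioi (fun t ht => ?_)
    exact inner_eq hab (ne_of_gt ht)
  rw [← hR, ← hswap, hL]


/-- The candidate integral function. -/
noncomputable def F (x : ℝ) : ℝ := ∫ t in Ioi (0:ℝ), rexp (-(t * x)) * g t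

lemma integrable_Fint {x : ℝ} (hx : 0 < x) :
    IntegrableOn (fun t => rexp (-(t * x)) * g t) (Ioi (0:ℝ)) := by
  apply (integrable_exp_neg_mul hx).mono'
  · exact (((Real.continuous_exp.comp (by continuity)).continuousOn.mul
      continuousOn_g).aestronglyMeasurable measurableSet_Ioi)
  · filter_upwards [ae_restrict_mem measurableSet_Ioi] with t ht
    rw [norm_mul, norm_of_nonneg (exp_pos _).le, norm_of_nonneg (g_nonneg ht)]
    exact mul_le_of_le_one_right (exp_pos _).le (g_le_one ht)

lemma F_bound {x : ℝ} (hx : 0 < x) : |F x| ≤ 1 / x := by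
  have h := norm_integral_le_of_norm_le (μ := volume.restrict (Ioi 0))
    (f := fun t => rexp (-(t * x)) * g t) (g := fun t => rexp (-(t * x)))
    (integrable_exp_neg_mul hx) ?_
  · rw [integral_exp_neg_mul hx] at h
    exact h
  · filter_upwards [ae_restrict_mem measurableSet_Ioi] with t ht
    rw [norm_mul, norm_of_nonneg (exp_pos _).le, norm_of_nonneg (g_nonneg ht)]
    exact mul_le_of_le_one_right (exp_pos _).le (g_le_one ht)

lemma pointwise {x t : ℝ} (ht : 0 < t) :
    rexp (-(t * x)) * g t - rexp (-(t * (x + 1))) * g t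
      = rexp (-(t * x)) - (rexp (-(x * t)) - rexp (-((x + 1) * t))) / t := by
  have h1 := one_sub_exp_pos ht
  have e1 : rexp (-(t * (x + 1))) = rexp (-(t * x)) * rexp (-t) := by
    rw [← exp_add]; ring_nf
  have e2 : rexp (-(x * t)) = rexp (-(t * x)) := by rw [mul_comm]
  have e3 : rexp (-((x + 1) * t)) = rexp (-(t * x)) * rexp (-t) := by
    rw [← exp_add]; ring_nf
  rw [e1, e2, e3, g]
  field_simp

lemma F_rec {x : ℝ} (hx : 0 < x) :
    F x - F (x + 1) = 1 / x - (log (x + 1) - log x) := by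
  have hx1 : (0:ℝ) < x + 1 := by linarith
  rw [F, F, ← integral_sub (integrable_Fint hx) (integrable_Fint hx1)]
  calc (∫ t in Ioi (0:ℝ), (rexp (-(t * x)) * g t - rexp (-(t * (x + 1))) * g t))
      = ∫ t in Ioi (0:ℝ), (rexp (-(t * x)) - (rexp (-(x * t)) - rexp (-((x + 1) * t))) / t) :=
        setIntegral_congr_fun measurableSet_Ioi (fun t ht => pointwise ht)
    _ = (∫ t in Ioi (0:ℝ), rexp (-(t * x)))
        - ∫ t in Ioi (0:ℝ), (rexp (-(x * t)) - rexp (-((x + 1) * t))) / t :=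
        integral_sub (integrable_exp_neg_mul hx) (frullani_integrable hx (by linarith))
    _ = 1 / x - (log (x + 1) - log x) := by
        rw [integral_exp_neg_mul hx, frullani hx (by linarith : x ≤ x + 1)]


noncomputable def f : ℝ → ℝ := log ∘ Real.Gamma

lemma hder {x : ℝ} (hx : 0 < x) : DifferentiableAt ℝ f x := by
  refine (Real.differentiableAt_Gamma ?_).log (Real.Gamma_ne_zero ?_) <;>
    exact fun m => ((neg_nonpos.mpr m.cast_nonneg).trans_lt hx).ne'

lemma digamma_eq {x : ℝ} (hx : 0 < x) : digamma x = deriv f x := by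
  rw [f, Function.comp_def, deriv.log
    (Real.differentiableAt_Gamma fun m => ((neg_nonpos.mpr m.cast_nonneg).trans_lt hx).ne')
    (Real.Gamma_pos_of_pos hx).ne']
  rfl

lemma h_rec {x : ℝ} (hx : 0 < x) : f (x + 1) = f x + log x := by
  simp only [f, Function.comp_apply, Real.Gamma_add_one hx.ne',
    log_mul hx.ne' (Real.Gamma_pos_of_pos hx).ne', add_comm]

lemma hder_rec {x : ℝ} (hx : 0 < x) : deriv f (x + 1) = deriv f x + 1 / x := by
  rw [← deriv_comp_add_const, one_div, ← Real.deriv_log,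
    ← deriv_add (hder hx) (Real.differentiableAt_log hx.ne')]
  apply Filter.EventuallyEq.deriv_eq
  filter_upwards [eventually_gt_nhds hx] with y hy
  exact h_rec hy

lemma H_bound {x : ℝ} (hx : 0 < x) : |deriv f x - log x| ≤ 1 / x := by
  have hc : ConvexOn ℝ (Ioi 0) f := Real.convexOn_log_Gamma
  have hx1 : (0:ℝ) < x + 1 := by linarith
  have hslope : slope f x (x + 1) = log x := by
    rw [slope_def_field, h_rec hx, show x + 1 - x = (1:ℝ) by ring, div_one, add_sub_cancel_left]
  have h1 : deriv f x ≤ log x := by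
    rw [← hslope]
    exact hc.deriv_le_slope (mem_Ioi.mpr hx) (mem_Ioi.mpr hx1) (by linarith) (hder hx)
  have h2 : log x ≤ deriv f x + 1 / x := by
    rw [← hder_rec hx, ← hslope]
    exact hc.slope_le_deriv (mem_Ioi.mpr hx) (mem_Ioi.mpr hx1) (by linarith) (hder hx1)
  rw [abs_le]
  constructor <;> linarith

lemma D_rec {x : ℝ} (hx : 0 < x) :
    (deriv f (x + 1) - log (x + 1)) + F (x + 1) = (deriv f x - log x) + F x := by
  have h1 := hder_rec hx
  have h2 := F_rec hx
  linarith

lemma D_eq_zero {x : ℝ} (hx : 0 < x) : (deriv f x - log x) + F x = 0 := by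
  have hconst : ∀ n : ℕ, (deriv f (x + n) - log (x + n)) + F (x + n)
      = (deriv f x - log x) + F x := by
    intro n
    induction n with
    | zero => norm_num
    | succ n ih =>
      rw [← ih, ← D_rec (by positivity : (0:ℝ) < x + n)]
      push_cast
      ring_nf
  have hlim : Tendsto (fun n : ℕ => (deriv f (x + n) - log (x + n)) + F (x + n)) atTop (𝓝 0) := by
    have hb : Tendsto (fun n : ℕ => 2 / (x + n)) atTop (𝓝 0) := by
      apply Tendsto.div_atTop tendsto_const_nhds
      exact tendsto_atTop_add_const_left _ _ tendsto_natCast_atTop_atTop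
    refine squeeze_zero_norm (fun n => ?_) hb
    · 
      have hxn : (0:ℝ) < x + n := by positivity
      calc ‖(deriv f (x + n) - log (x + n)) + F (x + n)‖
          ≤ |deriv f (x + n) - log (x + n)| + |F (x + n)| := abs_add_le _ _
        _ ≤ 1 / (x + n) + 1 / (x + n) := add_le_add (H_bound hxn) (F_bound hxn)
        _ = 2 / (x + n) := by ring
  have := (tendsto_congr hconst).mp hlim
  exact tendsto_nhds_unique tendsto_const_nhds this


end DigammaAux

theorem digamma_sub_log_integral_repr (x : ℝ) (hx : 0 < x) :
    digamma x - Real.log x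
      = -∫ t in Set.Ioi (0 : ℝ), Real.exp (-t * x) * (1 / (1 - Real.exp (-t)) - 1 / t) := by
  have h := DigammaAux.D_eq_zero hx
  rw [DigammaAux.digamma_eq hx]
  have hF : DigammaAux.F x
      = ∫ t in Set.Ioi (0 : ℝ), Real.exp (-t * x) * (1 / (1 - Real.exp (-t)) - 1 / t) := by
    simp only [DigammaAux.F, DigammaAux.g, neg_mul]
  linarith
end
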